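/- Let T be a planar rooted tree whose vertices at distance 1 from the root are v_1, ..., v_n (in depth-first order). Then T is the colimit, in the category FPT, of the diagram consisting of the subtrees T_{v_1}, ..., T_{v_n}, the tree B_n, and for each i the two inclusions of the single-vertex tree v_i into T_{v_i} (as the root) and into B_n (as the i-th non-root vertex). -/

import Mathlib

/-- A finite rooted tree, encoded as a finite partial order (the tree order,
with the root as maximum element) in which the set of elements above any
vertex is a chain (the path from the vertex to the root). -/
structure RTree where
  V : Type
  finite : Finite V
  le : V → V → Prop
  le_refl : ∀ v, le v v
  le_antisymm : ∀ v w, le v w → le w v → v = w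
  le_trans : ∀ u v w, le u v → le v w → le u w
  root : V
  le_root : ∀ v, le v root
  up_total : ∀ u v w, le u v → le u w → le v w ∨ le w v

/-- A planar rooted tree: a rooted tree together with its depth-first ordering,
a linear order on the vertices arising from the total orderings of the incoming
edges at each vertex via a clockwise depth-first tree walk.  Such linear orders
are exactly those in which ancestors precede descendants and every principal
downset of the tree order is an interval. -/
structure PRTree extends RTree where
  dfle : V → V → Prop
  dfle_refl : ∀ v, dfle v v
  dfle_antisymm : ∀ v w, dfle v w → dfle w v → v = w
  dfle_trans : ∀ u v w, dfle u v → dfle v w → dfle u w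
  dfle_total : ∀ v w, dfle v w ∨ dfle w v
  dfle_of_le : ∀ v w, le v w → dfle w v
  downset_interval : ∀ u a b c, le a u → le c u → dfle a b → dfle b c → le b u

/-- A morphism in the category `FPT`: an order embedding of vertex sets which
preserves the depth-first ordering (but need not preserve the root). -/
structure FPTHom (T U : PRTree) where
  toFun : T.V → U.V
  inj : Function.Injective toFun
  map_le : ∀ v w, T.le v w → U.le (toFun v) (toFun w)
  reflect_le : ∀ v w, U.le (toFun v) (toFun w) → T.le v w
  map_dfle : ∀ v w, T.dfle v w → U.dfle (toFun v) (toFun w)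

def FPTHom.comp {T U W : PRTree} (g : FPTHom U W) (f : FPTHom T U) :
    FPTHom T W where
  toFun := fun v => g.toFun (f.toFun v)
  inj := fun _ _ h => f.inj (g.inj h)
  map_le := fun v w h => g.map_le _ _ (f.map_le v w h)
  reflect_le := fun v w h => f.reflect_le _ _ (g.reflect_le _ _ h)
  map_dfle := fun v w h => g.map_dfle _ _ (f.map_dfle v w h)

/-- The planar rooted tree with a single vertex. -/
def singlePRT : PRTree where
  V := PUnit
  finite := inferInstance
  le _ _ := True
  le_refl _ := trivial
  le_antisymm a b _ _ := @Subsingleton.elim PUnit _ a b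
  le_trans _ _ _ _ _ := trivial
  root := PUnit.unit
  le_root _ := trivial
  up_total _ _ _ _ _ := Or.inl trivial
  dfle _ _ := True
  dfle_refl _ := trivial
  dfle_antisymm a b _ _ := @Subsingleton.elim PUnit _ a b
  dfle_trans _ _ _ _ _ := trivial
  dfle_total _ _ := Or.inl trivial
  dfle_of_le _ _ _ := trivial
  downset_interval _ _ _ _ _ _ _ _ := trivial

/-- The subtree `T_v` of `T` consisting of `v` and everything above `v`
in the tree order, rooted at `v`, with the induced planar structure. -/
def PRTree.above (T : PRTree) (v : T.V) : PRTree where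
  V := {w : T.V // T.le w v}
  finite := by haveI := T.finite; exact Subtype.finite
  le a b := T.le a.1 b.1
  le_refl a := T.le_refl a.1
  le_antisymm a b h h' := Subtype.ext (T.le_antisymm a.1 b.1 h h')
  le_trans a b c h h' := T.le_trans a.1 b.1 c.1 h h'
  root := ⟨v, T.le_refl v⟩
  le_root a := a.2
  up_total a b c h h' := T.up_total a.1 b.1 c.1 h h'
  dfle a b := T.dfle a.1 b.1
  dfle_refl a := T.dfle_refl a.1
  dfle_antisymm a b h h' := Subtype.ext (T.dfle_antisymm a.1 b.1 h h')
  dfle_trans a b c h h' := T.dfle_trans a.1 b.1 c.1 h h'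
  dfle_total a b := T.dfle_total a.1 b.1
  dfle_of_le a b h := T.dfle_of_le a.1 b.1 h
  downset_interval u a b c h1 h2 h3 h4 := T.downset_interval u.1 a.1 b.1 c.1 h1 h2 h3 h4

/-- The inclusion of the subtree `T_v` into `T`, a morphism in `FPT`. -/
def aboveIncl (T : PRTree) (v : T.V) : FPTHom (T.above v) T where
  toFun := fun a => a.1
  inj := fun _ _ h => Subtype.ext h
  map_le := fun _ _ h => h
  reflect_le := fun _ _ h => h
  map_dfle := fun _ _ h => h

/-- The inclusion of the single-vertex tree into `T_v` as its root `v`,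
a morphism in `FPT`. -/
def singleToAbove (T : PRTree) (v : T.V) : FPTHom singlePRT (T.above v) where
  toFun := fun _ => ⟨v, T.le_refl v⟩
  inj := fun a b _ => @Subsingleton.elim PUnit _ a b
  map_le := fun _ _ _ => T.le_refl v
  reflect_le := fun _ _ _ => trivial
  map_dfle := fun _ _ _ => T.dfle_refl v

/-- The planar rooted tree `B_n`, with root `0` and `n` leaves `1, …, n`
each joined to the root by an edge, in their natural planar order. -/
def Bn (n : ℕ) : PRTree where
  V := Fin (n + 1)
  finite := inferInstance
  le a b := a = b ∨ b = 0
  le_refl _ := Or.inl rfl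
  le_antisymm := by
    rintro a b (rfl | rfl) h
    · rfl
    · rcases h with h | h
      · exact h.symm
      · exact h
  le_trans := by
    rintro a b c (rfl | rfl) h
    · exact h
    · rcases h with h | h
      · exact Or.inr h.symm
      · exact Or.inr h
  root := 0
  le_root _ := Or.inr rfl
  up_total := by
    rintro u v w (rfl | rfl) (rfl | rfl)
    · exact Or.inl (Or.inl rfl)
    · exact Or.inl (Or.inr rfl)
    · exact Or.inr (Or.inr rfl)
    · exact Or.inl (Or.inl rfl)
  dfle a b := a ≤ b
  dfle_refl a := le_refl a
  dfle_antisymm a b h h' := le_antisymm h h'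
  dfle_trans a b c h h' := le_trans h h'
  dfle_total a b := le_total a b
  dfle_of_le := by
    rintro v w (rfl | rfl)
    · exact le_refl v
    · exact Fin.zero_le v
  downset_interval := by
    rintro u a b c (rfl | rfl) hc hab hbc
    · rcases hc with rfl | rfl
      · exact Or.inl (le_antisymm hbc hab)
      · exact Or.inr rfl
    · exact Or.inr rfl

/-- The root vertex of `B_n`. -/
def BnRoot (n : ℕ) : (Bn n).V := (0 : Fin (n + 1))

/-- The `i`-th leaf of `B_n`. -/
def BnLeaf (n : ℕ) (i : Fin n) : (Bn n).V := i.succ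

/-- The inclusion of the single-vertex tree into a planar rooted tree `X` as
its root, a morphism in `FPT`. -/
def constRoot (X : PRTree) : FPTHom singlePRT X where
  toFun := fun _ => X.root
  inj := fun a b _ => @Subsingleton.elim PUnit _ a b
  map_le := fun _ _ _ => X.le_refl X.root
  reflect_le := fun _ _ _ => trivial
  map_dfle := fun _ _ _ => X.dfle_refl X.root

/-- The inclusion of the single-vertex tree into `Bₙ` as its `i`-th leaf,
a morphism in `FPT`. -/
def leafHom (n : ℕ) (i : Fin n) : FPTHom singlePRT (Bn n) where
  toFun := fun _ => BnLeaf n i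
  inj := fun a b _ => @Subsingleton.elim PUnit _ a b
  map_le := fun _ _ _ => Or.inl rfl
  reflect_le := fun _ _ _ => trivial
  map_dfle := fun _ _ _ => @le_refl (Fin (n + 1)) _ (BnLeaf n i)


lemma FPTHom.ext' {T U : PRTree} {f g : FPTHom T U} (h : f.toFun = g.toFun) : f = g := by
  cases f; cases g; cases h; rfl

/-- If `T` is a planar rooted tree whose vertices at distance `1` from the
root are `v 0, …, v (n-1)` in depth-first order, then `T`, together with the
inclusions of the subtrees `T_{v i}` and the canonical map from `Bₙ`, is the
colimit in `FPT` of the diagram consisting of the trees `T_{v i}` and `Bₙ`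
and, for each `i`, the two inclusions of the single-vertex tree into `T_{v i}`
(as the root) and into `Bₙ` (as the `i`-th non-root vertex). -/
theorem colimit_decomposition (T : PRTree) (n : ℕ) (v : Fin n → T.V)
    (hchild : ∀ i, v i ≠ T.root ∧ ∀ w, T.le (v i) w → w = v i ∨ w = T.root)
    (hall : ∀ w, w ≠ T.root → (∀ u, T.le w u → u = w ∨ u = T.root) → ∃ i, w = v i)
    (hmono : ∀ i j : Fin n, i < j → T.dfle (v i) (v j) ∧ v i ≠ v j) :
    ∃ cB : FPTHom (Bn n) T,
      cB.toFun (BnRoot n) = T.root ∧ (∀ i : Fin n, cB.toFun (BnLeaf n i) = v i) ∧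
      (∀ i : Fin n,
        FPTHom.comp (aboveIncl T (v i)) (constRoot (T.above (v i))) =
          FPTHom.comp cB (leafHom n i)) ∧
      ∀ (W : PRTree) (f : ∀ i : Fin n, FPTHom (T.above (v i)) W)
        (g : FPTHom (Bn n) W),
        (∀ i, FPTHom.comp (f i) (constRoot (T.above (v i))) =
            FPTHom.comp g (leafHom n i)) →
        ∃! h : FPTHom T W,
          (∀ i, FPTHom.comp h (aboveIncl T (v i)) = f i) ∧ FPTHom.comp h cB = g := by

  classical
  haveI := T.finite
  have vinj : ∀ i j : Fin n, v i = v j → i = j := by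
    intro i j hij
    rcases lt_trichotomy i j with h | h | h
    · exact absurd hij (hmono i j h).2
    · exact h
    · exact absurd hij.symm (hmono j i h).2
  have vne : ∀ i, v i ≠ T.root := fun i => (hchild i).1
  have exists_idxN : ∀ (N : ℕ) (w : T.V), ({x | T.le w x}).ncard ≤ N → w ≠ T.root →
      ∃ i, T.le w (v i) := by
    intro N
    induction N with
    | zero =>
      intro w hN _
      exfalso
      have hpos : 0 < ({x | T.le w x}).ncard :=
        (Set.ncard_pos (Set.toFinite _)).mpr ⟨w, T.le_refl w⟩
      omega
    | succ N ih =>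
      intro w hN hw
      by_cases hstep : ∀ u, T.le w u → u = w ∨ u = T.root
      · obtain ⟨i, hi⟩ := hall w hw hstep
        exact ⟨i, by rw [← hi]; exact T.le_refl w⟩
      · push_neg at hstep
        obtain ⟨u, hwu, hne1, hne2⟩ := hstep
        have hsubset : {x | T.le u x} ⊆ {x | T.le w x} :=
          fun x hx => T.le_trans w u x hwu hx
        have hss : {x | T.le u x} ⊂ {x | T.le w x} := by
          refine ⟨hsubset, fun hcc => ?_⟩
          have : T.le u w := hcc (T.le_refl w)
          exact hne1 (T.le_antisymm u w this hwu)
        have hlt : ({x | T.le u x}).ncard < ({x | T.le w x}).ncard :=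
          Set.ncard_lt_ncard hss (Set.toFinite _)
        obtain ⟨i, hi⟩ := ih u (by omega) hne2
        exact ⟨i, T.le_trans w u (v i) hwu hi⟩
  have exists_idx : ∀ w : T.V, w ≠ T.root → ∃ i, T.le w (v i) :=
    fun w hw => exists_idxN _ w le_rfl hw
  choose idx hidx using exists_idx
  have idx_unique : ∀ (w : T.V) (i j : Fin n), T.le w (v i) → T.le w (v j) → i = j := by
    intro w i j hi hj
    apply vinj
    rcases T.up_total w (v i) (v j) hi hj with h | h
    · rcases (hchild i).2 _ h with h' | h'
      · exact h'.symm
      · exact absurd h' (vne j)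
    · rcases (hchild j).2 _ h with h' | h'
      · exact h'
      · exact absurd h' (vne i)
  -- the map cB
  refine ⟨⟨fun k => if hk : k = (0 : Fin (n+1)) then T.root else v (k.pred hk),
    ?_, ?_, ?_, ?_⟩, ?_, ?_, ?_, ?_⟩
  · -- inj
    intro a b hab
    dsimp only at hab
    by_cases ha : a = (0 : Fin (n+1)) <;> by_cases hb : b = (0 : Fin (n+1))
    · exact ha.trans hb.symm
    · rw [dif_pos ha, dif_neg hb] at hab
      exact absurd hab.symm (vne _)
    · rw [dif_neg ha, dif_pos hb] at hab
      exact absurd hab (vne _)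
    · rw [dif_neg ha, dif_neg hb] at hab
      have h2 := vinj _ _ hab
      rw [← Fin.succ_pred a ha, ← Fin.succ_pred b hb, h2]
  · -- map_le
    intro a b hab
    beta_reduce
    rcases hab with rfl | rfl
    · exact T.le_refl _
    · refine (congrArg (T.le _) (dif_pos rfl)).mpr ?_
      exact T.le_root _
  · -- reflect_le
    intro a b hab
    beta_reduce at hab
    by_cases ha : a = (0 : Fin (n+1)) <;> by_cases hb : b = (0 : Fin (n+1))
    · exact Or.inl (ha.trans hb.symm)
    · rw [dif_pos ha, dif_neg hb] at hab
      have h2 : T.root = v (b.pred hb) := T.le_antisymm _ _ hab (T.le_root _)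
      exact absurd h2.symm (vne _)
    · exact Or.inr hb
    · rw [dif_neg ha, dif_neg hb] at hab
      rcases (hchild (a.pred ha)).2 _ hab with h' | h'
      · refine Or.inl ?_
        have h2 := vinj _ _ h'
        rw [← Fin.succ_pred a ha, ← Fin.succ_pred b hb, h2]
      · exact absurd h' (vne _)
  · -- map_dfle
    intro a b hab
    beta_reduce
    by_cases ha : a = (0 : Fin (n+1))
    · rw [dif_pos ha]
      exact T.dfle_of_le _ _ (T.le_root _)
    · have hb : b ≠ (0 : Fin (n+1)) := by
        intro hb0
        exact ha (Fin.le_zero_iff.mp (hb0 ▸ hab))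
      rw [dif_neg ha, dif_neg hb]
      have hab' : @LE.le (Fin (n+1)) _ a b := hab
      rcases lt_or_eq_of_le hab' with hlt | heq
      · have hplt : a.pred ha < b.pred hb := by
          rw [← Fin.succ_lt_succ_iff]
          exact lt_of_eq_of_lt (Fin.succ_pred a ha) (lt_of_lt_of_eq hlt (Fin.succ_pred b hb).symm)
        exact (hmono _ _ hplt).1
      · subst heq
        exact T.dfle_refl _
  · -- cB root
    exact dif_pos rfl
  · -- cB leaf
    intro i
    show (if hk : BnLeaf n i = (0 : Fin (n+1)) then T.root else v ((BnLeaf n i).pred hk)) = v i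
    have hne : BnLeaf n i ≠ (0 : Fin (n+1)) := Fin.succ_ne_zero i
    rw [dif_neg hne]
    simp [BnLeaf]
  · -- compatibility
    intro i
    apply FPTHom.ext'
    funext u
    show v i = (if hk : BnLeaf n i = (0 : Fin (n+1)) then T.root else v ((BnLeaf n i).pred hk))
    have hne : BnLeaf n i ≠ (0 : Fin (n+1)) := Fin.succ_ne_zero i
    rw [dif_neg hne]
    simp [BnLeaf]
  · -- universal property
    intro W f g hcomp
    have hfr : ∀ i : Fin n, (f i).toFun ⟨v i, T.le_refl _⟩ = g.toFun (BnLeaf n i) :=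
      fun i => congrArg (fun φ : FPTHom singlePRT W => φ.toFun PUnit.unit) (hcomp i)
    have hle_r : ∀ (i : Fin n) (a : T.V) (ha : T.le a (v i)),
        W.le ((f i).toFun ⟨a, ha⟩) (g.toFun (BnLeaf n i)) := by
      intro i a ha
      rw [← hfr]
      exact (f i).map_le ⟨a, ha⟩ ⟨v i, T.le_refl _⟩ ha
    have hr_le0 : ∀ i : Fin n, W.le (g.toFun (BnLeaf n i)) (g.toFun (BnRoot n)) :=
      fun i => g.map_le _ _ (Or.inr rfl)
    have crossg : ∀ p q : Fin n, p ≠ q →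
        W.le (g.toFun (BnLeaf n p)) (g.toFun (BnLeaf n q)) → False := by
      intro p q hpq h
      rcases g.reflect_le _ _ h with h' | h'
      · exact hpq (Fin.succ_injective _ h')
      · exact Fin.succ_ne_zero q h'
    have cross : ∀ i j : Fin n, i ≠ j → ∀ x : W.V,
        W.le x (g.toFun (BnLeaf n i)) → W.le x (g.toFun (BnLeaf n j)) → False := by
      intro i j hij x hxi hxj
      rcases W.up_total x _ _ hxi hxj with h | h
      · exact crossg i j hij h
      · exact crossg j i (Ne.symm hij) h
    have cross0 : ∀ j : Fin n, W.le (g.toFun (BnRoot n)) (g.toFun (BnLeaf n j)) → False := by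
      intro j h
      rcases g.reflect_le _ _ h with h' | h'
      · exact Fin.succ_ne_zero j h'.symm
      · exact Fin.succ_ne_zero j h'
    have dfle_idx : ∀ (a b : T.V) (i j : Fin n), T.le a (v i) → T.le b (v j) →
        i ≠ j → T.dfle a b → i < j := by
      intro a b i j hia hjb hij hab
      rcases lt_trichotomy i j with h | h | h
      · exact h
      · exact absurd h hij
      · exfalso
        have h1 : T.dfle (v i) a := T.dfle_of_le _ _ hia
        have h2 : T.dfle (v i) b := T.dfle_trans _ _ _ h1 hab
        have h3 : T.le (v i) (v j) :=
          T.downset_interval (v j) (v j) (v i) b (T.le_refl _) hjb (hmono j i h).1 h2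
        rcases (hchild i).2 _ h3 with h' | h'
        · exact hij (vinj _ _ h').symm
        · exact vne j h'
    have key : ∀ (w : T.V) (hw : w ≠ T.root) (i : Fin n) (hi : T.le w (v i)),
        (f (idx w hw)).toFun ⟨w, hidx w hw⟩ = (f i).toFun ⟨w, hi⟩ := by
      intro w hw i hi
      cases idx_unique w (idx w hw) i (hidx w hw) hi
      rfl
    refine ⟨⟨fun w => if hw : w = T.root then g.toFun (BnRoot n)
        else (f (idx w hw)).toFun ⟨w, hidx w hw⟩, ?_, ?_, ?_, ?_⟩, ⟨?_, ?_⟩, ?_⟩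
    · -- inj
      intro a b hab
      dsimp only at hab
      by_cases ha : a = T.root <;> by_cases hb : b = T.root
      · exact ha.trans hb.symm
      · rw [dif_pos ha, dif_neg hb] at hab
        exact (cross0 _ (hab ▸ hle_r (idx b hb) b (hidx b hb))).elim
      · rw [dif_neg ha, dif_pos hb] at hab
        exact (cross0 _ (hab ▸ hle_r (idx a ha) a (hidx a ha))).elim
      · rw [dif_neg ha, dif_neg hb] at hab
        by_cases hij : idx a ha = idx b hb
        · have ha' : T.le a (v (idx b hb)) := hij ▸ hidx a ha
          rw [key a ha _ ha'] at hab
          exact congrArg Subtype.val ((f (idx b hb)).inj hab)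
        · exact (cross _ _ hij _ (hle_r _ a (hidx a ha))
            (hab ▸ hle_r _ b (hidx b hb))).elim
    · -- map_le
      intro a b hab
      beta_reduce
      by_cases hb : b = T.root
      · rw [dif_pos hb]
        by_cases ha : a = T.root
        · rw [dif_pos ha]; exact W.le_refl _
        · rw [dif_neg ha]
          exact W.le_trans _ _ _ (hle_r _ a (hidx a ha)) (hr_le0 _)
      · have ha : a ≠ T.root := by
          intro h0
          exact hb (T.le_antisymm b T.root (T.le_root b) (h0 ▸ hab))
        rw [dif_neg ha, dif_neg hb]
        have ha' : T.le a (v (idx b hb)) := T.le_trans _ _ _ hab (hidx b hb)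
        rw [key a ha _ ha']
        exact (f (idx b hb)).map_le ⟨a, ha'⟩ ⟨b, hidx b hb⟩ hab
    · -- reflect_le
      intro a b hab
      beta_reduce at hab
      by_cases hb : b = T.root
      · rw [hb]; exact T.le_root a
      · by_cases ha : a = T.root
        · rw [dif_pos ha, dif_neg hb] at hab
          exact (cross0 _ (W.le_trans _ _ _ hab (hle_r _ b (hidx b hb)))).elim
        · rw [dif_neg ha, dif_neg hb] at hab
          by_cases hij : idx a ha = idx b hb
          · have ha' : T.le a (v (idx b hb)) := hij ▸ hidx a ha
            rw [key a ha _ ha'] at hab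
            exact (f (idx b hb)).reflect_le ⟨a, ha'⟩ ⟨b, hidx b hb⟩ hab
          · exact (cross _ _ hij _ (hle_r _ a (hidx a ha))
              (W.le_trans _ _ _ hab (hle_r _ b (hidx b hb)))).elim
    · -- map_dfle
      intro a b hab
      beta_reduce
      by_cases ha : a = T.root
      · rw [dif_pos ha]
        by_cases hb : b = T.root
        · rw [dif_pos hb]; exact W.dfle_refl _
        · rw [dif_neg hb]
          exact W.dfle_of_le _ _
            (W.le_trans _ _ _ (hle_r _ b (hidx b hb)) (hr_le0 _))
      · have hb : b ≠ T.root := by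
          intro h0
          exact ha (T.dfle_antisymm a T.root (h0 ▸ hab)
            (T.dfle_of_le a T.root (T.le_root a)))
        rw [dif_neg ha, dif_neg hb]
        by_cases hij : idx a ha = idx b hb
        · have ha' : T.le a (v (idx b hb)) := hij ▸ hidx a ha
          rw [key a ha _ ha']
          exact (f (idx b hb)).map_dfle ⟨a, ha'⟩ ⟨b, hidx b hb⟩ hab
        · have hlt : idx a ha < idx b hb :=
            dfle_idx a b _ _ (hidx a ha) (hidx b hb) hij hab
          set x := (f (idx a ha)).toFun ⟨a, hidx a ha⟩ with hx
          set y := (f (idx b hb)).toFun ⟨b, hidx b hb⟩ with hy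
          rcases W.dfle_total x y with h | h
          · exact h
          · exfalso
            have h1 : W.dfle (g.toFun (BnLeaf n (idx b hb))) y :=
              W.dfle_of_le _ _ (hle_r _ b (hidx b hb))
            have h2 : W.dfle (g.toFun (BnLeaf n (idx b hb))) x :=
              W.dfle_trans _ _ _ h1 h
            have h3 : W.dfle (g.toFun (BnLeaf n (idx a ha)))
                (g.toFun (BnLeaf n (idx b hb))) := by
              apply g.map_dfle
              show @LE.le (Fin (n+1)) _ (BnLeaf n (idx a ha)) (BnLeaf n (idx b hb))
              exact Fin.succ_le_succ_iff.mpr (le_of_lt hlt)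
            have h4 : W.le (g.toFun (BnLeaf n (idx b hb)))
                (g.toFun (BnLeaf n (idx a ha))) :=
              W.downset_interval (g.toFun (BnLeaf n (idx a ha))) _ _ x
                (W.le_refl _) (hle_r _ a (hidx a ha)) h3 h2
            exact crossg _ _ (Ne.symm hij) h4
    · -- comp with aboveIncl = f i
      intro i
      apply FPTHom.ext'
      funext w
      obtain ⟨w, hw⟩ := w
      have hw' : w ≠ T.root := by
        intro e
        exact vne i (T.le_antisymm (v i) T.root (T.le_root _) (e ▸ hw))
      show (if h : w = T.root then g.toFun (BnRoot n)
        else (f (idx w h)).toFun ⟨w, hidx w h⟩) = (f i).toFun ⟨w, hw⟩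
      rw [dif_neg hw']
      exact key w hw' i hw
    · -- comp with cB = g
      apply FPTHom.ext'
      funext k
      show (if hw : (if hk : k = (0 : Fin (n+1)) then T.root else v (k.pred hk)) = T.root
          then g.toFun (BnRoot n)
          else (f (idx _ hw)).toFun ⟨_, hidx _ hw⟩) = g.toFun k
      by_cases hk : k = (0 : Fin (n+1))
      · subst hk
        exact dif_pos (dif_pos rfl)
      · rw [dif_neg hk]
        rw [dif_neg (vne (k.pred hk))]
        rw [key (v (k.pred hk)) (vne (k.pred hk)) (k.pred hk) (T.le_refl _), hfr]
        have hsp : BnLeaf n (k.pred hk) = k := Fin.succ_pred k hk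
        rw [hsp]
    · -- uniqueness
      rintro h' ⟨hf', hg'⟩
      apply FPTHom.ext'
      funext w
      show h'.toFun w = (if hw : w = T.root then g.toFun (BnRoot n)
        else (f (idx w hw)).toFun ⟨w, hidx w hw⟩)
      by_cases hw : w = T.root
      · rw [dif_pos hw]
        have h0 := congrArg (fun φ : FPTHom (Bn n) W => φ.toFun (BnRoot n)) hg'
        simp only [FPTHom.comp] at h0
        have hc : (if hk : BnRoot n = (0 : Fin (n+1)) then T.root
            else v (Fin.pred (BnRoot n) hk)) = T.root := dif_pos rfl
        rw [hc] at h0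
        rw [hw]
        exact h0
      · rw [dif_neg hw]
        have h0 := congrArg
          (fun φ : FPTHom (T.above (v (idx w hw))) W => φ.toFun ⟨w, hidx w hw⟩)
          (hf' (idx w hw))
        simp only [FPTHom.comp, aboveIncl] at h0
        exact h0
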